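/- arXiv:1208.2064 — 3 statements merged into one kernel-verified Lean document; each statement's English description precedes it below -/
import Mathlib

section
/- For the scalar SDE dX(t) = −dt + X(t)dW(t), X(0) = 2T, the solution is X(t) = e^{−t/2 + W(t)} (2T − ∫₀^t e^{s/2 − W(s)} ds), and X(t) < 0 holds on the event { −(1/t)∫₀^t W(s) ds ≥ log(2T/t) }, which has positive probability; hence P(X(t) < 0) > 0 for each t ∈ (0,T]. -/
/-!
On the event `{log (2T/t) ≤ -(1/t) ∫₀ᵗ W}`, Jensen's inequality for `exp` gives
`2T ≤ ∫₀ᵗ e^{-W(s)} ds`, and the factor `e^{s/2} > 1` makes `∫₀ᵗ e^{s/2 - W(s)} ds > 2T`,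
so the bracket in `solutionX` is negative.

The event `{c ≤ Y}`, `Y = -(1/t) ∫₀ᵗ W`, is not null for any `c`: tilting by `e^{a W(t)}`
with `a = -2(c+1)/t` gives `E[(Y - c) e^{a W(t)}] = e^{t a²/2} > 0`. Computing this only needs
the Gaussian laws of `W(s)` and of the increment `W(t) - W(s)`, their independence, and Fubini;
the law of `Y` itself is never used.
-/

open MeasureTheory ProbabilityTheory Set intervalIntegral

/-- A standard one-dimensional Brownian motion on a probability space. -/
structure IsStandardBrownianMotion {Ω : Type*} [MeasurableSpace Ω]
    (P : Measure Ω) (W : ℝ → Ω → ℝ) : Prop where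
  measurable : ∀ t, Measurable (W t)
  cont_paths : ∀ ω, Continuous fun t => W t ω
  init : ∀ ω, W 0 ω = 0
  gauss_incr : ∀ s t : ℝ, 0 ≤ s → s ≤ t →
    P.map (fun ω => W t ω - W s ω) = gaussianReal 0 (Real.toNNReal (t - s))
  indep_incr : ∀ s t u v : ℝ, 0 ≤ s → s ≤ t → t ≤ u → u ≤ v →
    IndepFun (fun ω => W t ω - W s ω) (fun ω => W v ω - W u ω) P

/-- The explicit solution of `dX(t) = −dt + X(t) dW(t)`, `X(0) = 2T`, given by
the variation-of-constants formula. -/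
noncomputable def solutionX {Ω : Type*} (W : ℝ → Ω → ℝ) (T t : ℝ) (ω : Ω) : ℝ :=
  Real.exp (-t / 2 + W t ω) *
    (2 * T - ∫ s in (0:ℝ)..t, Real.exp (s / 2 - W s ω))

open Real
open scoped NNReal

lemma exp_intervalAverage_le {f : ℝ → ℝ} (hf : Continuous f) {a b : ℝ} (hab : a ≠ b) :
    exp (⨍ s in a..b, f s) ≤ ⨍ s in a..b, exp (f s) :=
  convexOn_exp.map_set_average_le continuous_exp.continuousOn isClosed_univ
    (by simp [Real.volume_uIoc, sub_ne_zero.mpr hab.symm]) (by simp [Real.volume_uIoc])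
    (by simp) hf.integrableOn_uIoc (continuous_exp.comp hf).integrableOn_uIoc

lemma solutionX_neg_of_le_exp {Ω : Type*} {W : ℝ → Ω → ℝ} {ω : Ω}
    (hW : Continuous fun s => W s ω) (T : ℝ) {t : ℝ} (ht : 0 < t)
    (h : 2 * T / t ≤ exp (-(1 / t) * ∫ s in (0:ℝ)..t, W s ω)) :
    solutionX W T t ω < 0 := by
  have jensen : 2 * T / t ≤ t⁻¹ * ∫ s in (0:ℝ)..t, exp (-W s ω) := by
    have := exp_intervalAverage_le (f := fun s => -W s ω) hW.neg ht.ne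
    simp only [interval_average_eq, smul_eq_mul, sub_zero, intervalIntegral.integral_neg] at this
    calc 2 * T / t ≤ _ := h
      _ = exp (t⁻¹ * -∫ s in (0:ℝ)..t, W s ω) := by ring_nf
      _ ≤ _ := this
  have drift : ∫ s in (0:ℝ)..t, exp (-W s ω) < ∫ s in (0:ℝ)..t, exp (s / 2 - W s ω) :=
    intervalIntegral.integral_lt_integral_of_continuousOn_of_le_of_exists_lt ht
      (by fun_prop) (by fun_prop)
      (fun s hs => exp_le_exp.mpr (by linarith [hs.1]))
      ⟨t, ⟨ht.le, le_rfl⟩, exp_lt_exp.mpr (by linarith)⟩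
  have hbracket : 2 * T < ∫ s in (0:ℝ)..t, exp (s / 2 - W s ω) := by
    rw [div_le_iff₀' ht, ← mul_assoc, mul_comm t, inv_mul_cancel₀ ht.ne'] at jensen
    linarith
  exact mul_neg_of_pos_of_neg (exp_pos _) (by linarith)

section GaussianMoments

variable (v : ℝ≥0) (a : ℝ)

lemma integral_exp_mul_gaussianReal :
    ∫ x, exp (a * x) ∂gaussianReal 0 v = exp (v * a ^ 2 / 2) := by
  simpa [mgf] using congrFun (mgf_id_gaussianReal (μ := 0) (v := v)) a

lemma integrable_mul_exp_mul_gaussianReal :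
    Integrable (fun x => x * exp (a * x)) (gaussianReal 0 v) := by
  simpa using integrable_pow_mul_exp_of_mem_interior_integrableExpSet
    (X := id) (μ := gaussianReal 0 v) (v := a) (by simp) 1

lemma integral_mul_exp_mul_gaussianReal :
    ∫ x, x * exp (a * x) ∂gaussianReal 0 v = v * a * exp (v * a ^ 2 / 2) := by
  have hmgf : mgf id (gaussianReal 0 v) = fun b => exp (v * b ^ 2 / 2) := by
    simp [mgf_id_gaussianReal]
  have hderiv : HasDerivAt (fun b => exp (v * b ^ 2 / 2)) (exp (v * a ^ 2 / 2) * (v * a)) a := by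
    convert (((hasDerivAt_pow 2 a).const_mul (v : ℝ)).div_const 2).exp using 1
    norm_num; ring
  have := deriv_mgf (X := id) (μ := gaussianReal 0 v) (t := a) (by simp)
  rw [hmgf, hderiv.deriv] at this
  simpa [mul_comm] using this.symm

lemma integral_norm_mul_exp_mul_gaussianReal_le :
    ∫ x, ‖x * exp (a * x)‖ ∂gaussianReal 0 v
      ≤ exp (v * (a + 1) ^ 2 / 2) + exp (v * (a - 1) ^ 2 / 2) := by
  rw [← integral_exp_mul_gaussianReal, ← integral_exp_mul_gaussianReal,
    ← integral_add (integrable_exp_mul_gaussianReal _) (integrable_exp_mul_gaussianReal _)]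
  refine integral_mono (integrable_mul_exp_mul_gaussianReal v a).norm
    ((integrable_exp_mul_gaussianReal _).add (integrable_exp_mul_gaussianReal _)) fun x => ?_
  have habs : |x| ≤ exp x + exp (-x) := by
    rcases le_total 0 x with hx | hx
    · rw [abs_of_nonneg hx]; linarith [add_one_le_exp x, exp_pos (-x)]
    · rw [abs_of_nonpos hx]; linarith [add_one_le_exp (-x), exp_pos x]
  calc ‖x * exp (a * x)‖ = |x| * exp (a * x) := by
        rw [norm_mul, norm_eq_abs, norm_of_nonneg (exp_pos _).le]
    _ ≤ (exp x + exp (-x)) * exp (a * x) := by gcongr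
    _ = exp ((a + 1) * x) + exp ((a - 1) * x) := by
        rw [add_mul, ← exp_add, ← exp_add]; ring_nf

end GaussianMoments

lemma mul_exp_mul_eq_mul_exp_mul_mul_exp_sub (a x y : ℝ) :
    x * exp (a * y) = x * exp (a * x) * exp (a * (y - x)) := by
  rw [mul_assoc, ← exp_add]; ring_nf

lemma measure_setOf_le_pos_of_integral_sub_mul_pos {Ω : Type*} [MeasurableSpace Ω]
    {P : Measure Ω} {Y Z : Ω → ℝ} {c : ℝ} (hZ : ∀ ω, 0 ≤ Z ω)
    (h : 0 < ∫ ω, (Y ω - c) * Z ω ∂P) : 0 < P {ω | c ≤ Y ω} := by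
  refine pos_iff_ne_zero.mpr fun hzero => h.not_ge (integral_nonpos_of_ae ?_)
  have hlt : ∀ᵐ ω ∂P, Y ω < c := ae_iff.mpr (by simpa using hzero)
  filter_upwards [hlt] with ω hω
  exact mul_nonpos_of_nonpos_of_nonneg (by linarith) (hZ ω)

namespace IsStandardBrownianMotion

variable {Ω : Type*} [MeasurableSpace Ω] {P : Measure Ω} {W : ℝ → Ω → ℝ}
  (hW : IsStandardBrownianMotion P W) {s t : ℝ}
include hW

lemma map_eq_gaussianReal (hs : 0 ≤ s) : P.map (W s) = gaussianReal 0 s.toNNReal := by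
  simpa [hW.init] using hW.gauss_incr 0 s le_rfl hs

lemma indepFun_incr (hs : 0 ≤ s) (hst : s ≤ t) :
    IndepFun (W s) (fun ω => W t ω - W s ω) P := by
  simpa [hW.init] using hW.indep_incr 0 s s t le_rfl hs le_rfl hst

lemma measurable_incr : Measurable fun ω => W t ω - W s ω :=
  (hW.measurable t).sub (hW.measurable s)

lemma integrable_comp_mul_comp_incr (hs : 0 ≤ s) (hst : s ≤ t) {f g : ℝ → ℝ}
    (hf : Measurable f) (hg : Measurable g) (hfi : Integrable f (gaussianReal 0 s.toNNReal))
    (hgi : Integrable g (gaussianReal 0 (t - s).toNNReal)) :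
    Integrable (fun ω => f (W s ω) * g (W t ω - W s ω)) P := by
  rw [← hW.map_eq_gaussianReal hs] at hfi
  rw [← hW.gauss_incr s t hs hst] at hgi
  exact ((hW.indepFun_incr hs hst).comp hf hg).integrable_mul
    ((integrable_map_measure hf.aestronglyMeasurable (hW.measurable s).aemeasurable).mp hfi)
    ((integrable_map_measure hg.aestronglyMeasurable
      hW.measurable_incr.aemeasurable).mp hgi)

lemma integral_comp_mul_comp_incr (hs : 0 ≤ s) (hst : s ≤ t) {f g : ℝ → ℝ}
    (hf : Measurable f) (hg : Measurable g) :
    ∫ ω, f (W s ω) * g (W t ω - W s ω) ∂P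
      = (∫ x, f x ∂gaussianReal 0 s.toNNReal)
        * ∫ x, g x ∂gaussianReal 0 (t - s).toNNReal := by
  rw [← hW.map_eq_gaussianReal hs, ← hW.gauss_incr s t hs hst,
    integral_map (hW.measurable s).aemeasurable hf.aestronglyMeasurable,
    integral_map hW.measurable_incr.aemeasurable hg.aestronglyMeasurable]
  exact ((hW.indepFun_incr hs hst).comp hf hg).integral_fun_mul_eq_mul_integral
    (hf.comp (hW.measurable s)).aestronglyMeasurable
    (hg.comp hW.measurable_incr).aestronglyMeasurable

lemma integrable_exp_mul (ht : 0 ≤ t) (a : ℝ) : Integrable (fun ω => exp (a * W t ω)) P := by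
  have := integrable_exp_mul_gaussianReal (μ := 0) (v := t.toNNReal) a
  rw [← hW.map_eq_gaussianReal ht] at this
  exact (integrable_map_measure (by fun_prop) (hW.measurable t).aemeasurable).mp this

lemma integral_exp_mul (ht : 0 ≤ t) (a : ℝ) :
    ∫ ω, exp (a * W t ω) ∂P = exp (t * a ^ 2 / 2) := by
  rw [← integral_map (f := fun x => exp (a * x)) (hW.measurable t).aemeasurable (by fun_prop),
    hW.map_eq_gaussianReal ht, integral_exp_mul_gaussianReal, coe_toNNReal t ht]

lemma integrable_mul_exp_mul (hs : 0 ≤ s) (hst : s ≤ t) (a : ℝ) :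
    Integrable (fun ω => W s ω * exp (a * W t ω)) P := by
  simp_rw [mul_exp_mul_eq_mul_exp_mul_mul_exp_sub a (W s _) (W t _)]
  exact hW.integrable_comp_mul_comp_incr hs hst (by fun_prop) (by fun_prop)
    (integrable_mul_exp_mul_gaussianReal _ a) (integrable_exp_mul_gaussianReal a)

lemma integral_mul_exp_mul (hs : 0 ≤ s) (hst : s ≤ t) (a : ℝ) :
    ∫ ω, W s ω * exp (a * W t ω) ∂P = s * a * exp (t * a ^ 2 / 2) := by
  simp_rw [mul_exp_mul_eq_mul_exp_mul_mul_exp_sub a (W s _) (W t _)]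
  rw [hW.integral_comp_mul_comp_incr hs hst (f := fun x => x * exp (a * x))
    (g := fun y => exp (a * y)) (by fun_prop) (by fun_prop), integral_mul_exp_mul_gaussianReal,
    integral_exp_mul_gaussianReal, coe_toNNReal s hs, coe_toNNReal _ (sub_nonneg.mpr hst),
    mul_assoc, ← exp_add]
  ring_nf

lemma integral_norm_mul_exp_mul_le (hs : 0 ≤ s) (hst : s ≤ t) (a : ℝ) :
    ∫ ω, ‖W s ω * exp (a * W t ω)‖ ∂P
      ≤ (exp (s * (a + 1) ^ 2 / 2) + exp (s * (a - 1) ^ 2 / 2)) * exp ((t - s) * a ^ 2 / 2) := by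
  simp_rw [mul_exp_mul_eq_mul_exp_mul_mul_exp_sub a (W s _) (W t _), norm_mul (_ * _),
    norm_of_nonneg (exp_pos _).le]
  rw [hW.integral_comp_mul_comp_incr hs hst (f := fun x => ‖x * exp (a * x)‖)
    (g := fun y => exp (a * y)) (by fun_prop) (by fun_prop), integral_exp_mul_gaussianReal,
    coe_toNNReal _ (sub_nonneg.mpr hst)]
  gcongr
  simpa [coe_toNNReal s hs] using integral_norm_mul_exp_mul_gaussianReal_le s.toNNReal a

variable [IsProbabilityMeasure P]

lemma integrable_uncurry_mul_exp_mul (a : ℝ) :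
    Integrable (Function.uncurry fun s ω => W s ω * exp (a * W t ω))
      ((volume.restrict (Ioc 0 t)).prod P) := by
  have hmeas : AEStronglyMeasurable (Function.uncurry fun s ω => W s ω * exp (a * W t ω))
      ((volume.restrict (Ioc 0 t)).prod P) :=
    ((measurable_uncurry_of_continuous_of_measurable hW.cont_paths hW.measurable).mul
      (by have := hW.measurable t; fun_prop)).aestronglyMeasurable
  have hbound : IntegrableOn (fun s => (exp (s * (a + 1) ^ 2 / 2) + exp (s * (a - 1) ^ 2 / 2))
      * exp ((t - s) * a ^ 2 / 2)) (Ioc 0 t) :=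
    (by fun_prop : Continuous _).integrableOn_Ioc
  refine (integrable_prod_iff hmeas).mpr ⟨?_, hbound.mono' hmeas.norm.integral_prod_right' ?_⟩
  all_goals filter_upwards [ae_restrict_mem measurableSet_Ioc] with s hs
  · exact hW.integrable_mul_exp_mul hs.1.le hs.2 a
  · rw [norm_of_nonneg (integral_nonneg fun ω => norm_nonneg _)]
    exact hW.integral_norm_mul_exp_mul_le hs.1.le hs.2 a

lemma integrable_intervalIntegral_mul_exp_mul (ht : 0 ≤ t) (a : ℝ) :
    Integrable (fun ω => (∫ s in 0..t, W s ω) * exp (a * W t ω)) P := by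
  simp_rw [← intervalIntegral.integral_mul_const, integral_of_le ht]
  exact (hW.integrable_uncurry_mul_exp_mul a).integral_prod_right

lemma integral_intervalIntegral_mul_exp_mul (ht : 0 ≤ t) (a : ℝ) :
    ∫ ω, (∫ s in 0..t, W s ω) * exp (a * W t ω) ∂P
      = t ^ 2 / 2 * a * exp (t * a ^ 2 / 2) := by
  simp_rw [← intervalIntegral.integral_mul_const, integral_of_le ht]
  rw [← integral_integral_swap (hW.integrable_uncurry_mul_exp_mul a),
    setIntegral_congr_fun measurableSet_Ioc
      fun s hs => hW.integral_mul_exp_mul hs.1.le hs.2 a,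
    ← integral_of_le ht, intervalIntegral.integral_mul_const,
    intervalIntegral.integral_mul_const, integral_id]
  ring

lemma measure_setOf_le_neg_average_pos (ht : 0 < t) (c : ℝ) :
    0 < P {ω | c ≤ -(1 / t) * ∫ s in 0..t, W s ω} := by
  set a := -2 * (c + 1) / t
  refine measure_setOf_le_pos_of_integral_sub_mul_pos (Z := fun ω => exp (a * W t ω))
    (fun _ => (exp_pos _).le) ?_
  have htilt : ∫ ω, (-(1 / t) * (∫ s in 0..t, W s ω) - c) * exp (a * W t ω) ∂P
      = exp (t * a ^ 2 / 2) := by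
    simp_rw [sub_mul, mul_assoc]
    rw [integral_sub ((hW.integrable_intervalIntegral_mul_exp_mul ht.le a).const_mul _)
        ((hW.integrable_exp_mul ht.le a).const_mul c), MeasureTheory.integral_const_mul,
      MeasureTheory.integral_const_mul,
      hW.integral_intervalIntegral_mul_exp_mul ht.le, hW.integral_exp_mul ht.le]
    simp only [a]
    field_simp
    ring
  rw [htilt]
  positivity

end IsStandardBrownianMotion

theorem stmt_9_general {Ω : Type*} [MeasurableSpace Ω] (P : Measure Ω)
    [IsProbabilityMeasure P] (W : ℝ → Ω → ℝ)
    (hW : IsStandardBrownianMotion P W) (T : ℝ)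
    (t : ℝ) (ht : t ∈ Ioc 0 T) :
    {ω | Real.log (2 * T / t) ≤ -(1 / t) * ∫ s in (0:ℝ)..t, W s ω} ⊆
      {ω | solutionX W T t ω < 0} ∧
    0 < P {ω | Real.log (2 * T / t) ≤ -(1 / t) * ∫ s in (0:ℝ)..t, W s ω} ∧
    0 < P {ω | solutionX W T t ω < 0} := by
  have hsub : {ω | Real.log (2 * T / t) ≤ -(1 / t) * ∫ s in (0:ℝ)..t, W s ω} ⊆
      {ω | solutionX W T t ω < 0} := fun ω hω =>
    solutionX_neg_of_le_exp (hW.cont_paths ω) T ht.1 ((le_exp_log _).trans (exp_le_exp.mpr hω))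
  have hpos := hW.measure_setOf_le_neg_average_pos ht.1 (Real.log (2 * T / t))
  exact ⟨hsub, hpos, hpos.trans_le (measure_mono hsub)⟩

theorem stmt_9 {Ω : Type*} [MeasurableSpace Ω] (P : Measure Ω)
    [IsProbabilityMeasure P] (W : ℝ → Ω → ℝ)
    (hW : IsStandardBrownianMotion P W) (T : ℝ) (hT : 0 < T)
    (t : ℝ) (ht : t ∈ Ioc 0 T) :
    {ω | Real.log (2 * T / t) ≤ -(1 / t) * ∫ s in (0:ℝ)..t, W s ω} ⊆
      {ω | solutionX W T t ω < 0} ∧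
    0 < P {ω | Real.log (2 * T / t) ≤ -(1 / t) * ∫ s in (0:ℝ)..t, W s ω} ∧
    0 < P {ω | solutionX W T t ω < 0} :=
  stmt_9_general P W hW T t ht
end

section
/- Let Y : [0,T] → ℝ be continuous with Y(t) = 1 + (t−1)∫_t^T Y(s) ds for all t ∈ [0,T]. Then Y(0) = 1 − ∫₀^T e^{τ²/2 − τ} dτ, and for T sufficiently large Y(0) < 0. -/
/-!
Put `y t = ∫ s in t..T, Y s`, so that `y' = -Y = -1 - (t - 1) y` and `y T = 0`. The integrating
factor `exp (t ^ 2 / 2 - t)` turns this into `(exp (t ^ 2 / 2 - t) * y t)' = -exp (t ^ 2 / 2 - t)`,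
whence `y 0 = ∫ τ in 0..T, exp (τ ^ 2 / 2 - τ)` and `Y 0 = 1 - y 0`. Since
`exp (τ ^ 2 / 2 - τ) ≥ τ - 1`, this integral is at least `T ^ 2 / 2 - T`, which exceeds `1` once
`T ≥ 3`.
-/

open Real Set intervalIntegral MeasureTheory Topology

theorem hasDerivAt_exp_mul_integral_of_eq {Y : ℝ → ℝ} {a b t : ℝ}
    (hY : ContinuousOn Y (Icc a b)) (ht : t ∈ Ioo a b)
    (heq : Y t = 1 + (t - 1) * ∫ s in t..b, Y s) :
    HasDerivAt (fun u => exp (u ^ 2 / 2 - u) * ∫ s in u..b, Y s) (-exp (t ^ 2 / 2 - t)) t := by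
  have hnhds : Icc a b ∈ 𝓝 t := Icc_mem_nhds ht.1 ht.2
  have hint : IntervalIntegrable Y volume t b :=
    (hY.mono (uIcc_subset_Icc ⟨ht.1.le, ht.2.le⟩ ⟨ht.1.le.trans ht.2.le, le_rfl⟩)).intervalIntegrable
  have hprimitive : HasDerivAt (fun u => ∫ s in u..b, Y s) (-Y t) t :=
    integral_hasDerivAt_left hint ⟨Icc a b, hnhds, hY.aestronglyMeasurable measurableSet_Icc⟩
      (hY.continuousAt hnhds)
  have hexponent : HasDerivAt (fun u : ℝ => u ^ 2 / 2 - u) (t - 1) t :=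
    (((hasDerivAt_pow 2 t).div_const 2).sub (hasDerivAt_id' t)).congr_deriv (by norm_num)
  refine (hexponent.exp.mul hprimitive).congr_deriv ?_
  rw [heq]
  ring

theorem exp_mul_integral_eq_integral_exp {Y : ℝ → ℝ} {a b : ℝ} (hab : a ≤ b)
    (hY : ContinuousOn Y (Icc a b))
    (heq : ∀ t ∈ Icc a b, Y t = 1 + (t - 1) * ∫ s in t..b, Y s) :
    exp (a ^ 2 / 2 - a) * ∫ s in a..b, Y s = ∫ τ in a..b, exp (τ ^ 2 / 2 - τ) := by
  have hcont : ContinuousOn (fun u => exp (u ^ 2 / 2 - u) * ∫ s in u..b, Y s) (Icc a b) := by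
    have hprimitive := continuousOn_primitive_interval_left (μ := volume)
      (uIcc_of_le hab ▸ hY).integrableOn_Icc
    rw [uIcc_of_le hab] at hprimitive
    exact (by fun_prop : Continuous fun u : ℝ => exp (u ^ 2 / 2 - u)).continuousOn.mul hprimitive
  have hftc := integral_eq_sub_of_hasDerivAt_of_le hab hcont
    (fun t ht => hasDerivAt_exp_mul_integral_of_eq hY ht (heq t (Ioo_subset_Icc_self ht)))
    (Continuous.intervalIntegrable (by fun_prop) a b)
  simp only [integral_same, mul_zero, zero_sub, intervalIntegral.integral_neg] at hftc
  linarith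

theorem apply_zero_eq_one_sub_integral_exp {Y : ℝ → ℝ} {T : ℝ} (hT : 0 ≤ T)
    (hY : ContinuousOn Y (Icc 0 T))
    (heq : ∀ t ∈ Icc 0 T, Y t = 1 + (t - 1) * ∫ s in t..T, Y s) :
    Y 0 = 1 - ∫ τ in (0:ℝ)..T, exp (τ ^ 2 / 2 - τ) := by
  have hintegral := exp_mul_integral_eq_integral_exp hT hY heq
  rw [show (0:ℝ) ^ 2 / 2 - 0 = 0 by norm_num, exp_zero, one_mul] at hintegral
  rw [heq 0 ⟨le_rfl, hT⟩, hintegral]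
  ring

theorem sub_one_le_exp_sq_div_two_sub (τ : ℝ) : τ - 1 ≤ exp (τ ^ 2 / 2 - τ) := by
  nlinarith [add_one_le_exp (τ ^ 2 / 2 - τ), sq_nonneg (τ - 2)]

theorem sq_div_two_sub_le_integral_exp {T : ℝ} (hT : 0 ≤ T) :
    T ^ 2 / 2 - T ≤ ∫ τ in (0:ℝ)..T, exp (τ ^ 2 / 2 - τ) := by
  calc T ^ 2 / 2 - T = ∫ τ in (0:ℝ)..T, (τ - 1) := by simp [intervalIntegral.integral_sub]
    _ ≤ ∫ τ in (0:ℝ)..T, exp (τ ^ 2 / 2 - τ) :=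
      integral_mono_on hT (Continuous.intervalIntegrable (by fun_prop) 0 T)
        (Continuous.intervalIntegrable (by fun_prop) 0 T)
        fun τ _ => sub_one_le_exp_sq_div_two_sub τ

theorem stmt_12 :
    (∀ T : ℝ, 0 < T → ∀ Y : ℝ → ℝ, ContinuousOn Y (Icc 0 T) →
      (∀ t ∈ Icc 0 T, Y t = 1 + (t - 1) * ∫ s in t..T, Y s) →
      Y 0 = 1 - ∫ τ in (0:ℝ)..T, Real.exp (τ ^ 2 / 2 - τ)) ∧
    ∃ T₀ : ℝ, ∀ T : ℝ, T₀ ≤ T → ∀ Y : ℝ → ℝ, ContinuousOn Y (Icc 0 T) →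
      (∀ t ∈ Icc 0 T, Y t = 1 + (t - 1) * ∫ s in t..T, Y s) →
      Y 0 < 0 := by
  refine ⟨fun T hT Y hY heq => apply_zero_eq_one_sub_integral_exp hT.le hY heq,
    3, fun T hT Y hY heq => ?_⟩
  rw [apply_zero_eq_one_sub_integral_exp (by linarith) hY heq]
  nlinarith [sq_div_two_sub_le_integral_exp (T := T) (by linarith)]
end

section
/- Let A : [0,T]² → ℝ be continuous with A(t,s) ≥ 0, and ψ : [0,T] → ℝ continuous with ψ nonincreasing and ψ(t) ≥ 0. If additionally t ↦ A(t,s) is nonincreasing in t (i.e., A(t,s) ≥ A(τ,s) for t ≤ τ), then the unique continuous solution of the deterministic backward Volterra equation Y(t) = ψ(t) + ∫_t^T A(t,s) Y(s) ds satisfies Y(t) ≥ 0 for all t ∈ [0,T]. -/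
open Set intervalIntegral

/-!
Since `ψ ≥ 0` and `0 ≤ A ≤ M`, the negative part of the solution satisfies
`Y⁻(t) ≤ M ∫_t^T Y⁻(s) ds`. A backward Gronwall argument kills it:
`t ↦ e^{Mt} ∫_t^T Y⁻` is nondecreasing, nonnegative and vanishes at `T`, hence is identically
zero, and so is `Y⁻`.
-/

theorem eqOn_zero_of_le_mul_integral {a b M : ℝ} {N : ℝ → ℝ}
    (hN : ContinuousOn N (Icc a b)) (hN₀ : ∀ t ∈ Icc a b, 0 ≤ N t)
    (hle : ∀ t ∈ Icc a b, N t ≤ M * ∫ s in t..b, N s) :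
    EqOn N 0 (Icc a b) := by
  intro t ht
  have hab : a ≤ b := ht.1.trans ht.2
  set g : ℝ → ℝ := fun t => ∫ s in t..b, N s
  have hg₀ : ∀ t ∈ Icc a b, 0 ≤ g t := fun t ht =>
    integral_nonneg ht.2 fun s hs => hN₀ s ⟨ht.1.trans hs.1, hs.2⟩
  have hg : ContinuousOn g (Icc a b) := by
    simpa only [uIcc_of_le hab] using
      continuousOn_primitive_interval_left
        ((hN.mono (uIcc_of_le hab).subset).integrableOn_compact isCompact_uIcc)
  have hg' : ∀ t ∈ Ioo a b, HasDerivAt g (-N t) t := fun t ht =>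
    integral_hasDerivAt_left
      ((hN.mono (Icc_subset_Icc ht.1.le le_rfl)).intervalIntegrable_of_Icc ht.2.le)
      ((hN.mono Ioo_subset_Icc_self).stronglyMeasurableAtFilter isOpen_Ioo t ht)
      (hN.continuousAt (Icc_mem_nhds ht.1 ht.2))
  have hmono : MonotoneOn (fun t => Real.exp (M * t) * g t) (Icc a b) := by
    refine monotoneOn_of_hasDerivWithinAt_nonneg
      (f' := fun t => Real.exp (M * t) * (M * g t - N t))
      (convex_Icc a b) ((Real.continuous_exp.comp (continuous_const_mul M)).continuousOn.mul hg)
      (fun t ht => ?_) fun t ht => ?_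
    all_goals rw [interior_Icc] at ht
    · have := ((hasDerivAt_id t).const_mul M).exp.mul (hg' t ht)
      exact (this.congr_deriv (by simp only [id_eq, mul_one, mul_neg]; ring)).hasDerivWithinAt
    · exact mul_nonneg (Real.exp_pos _).le (sub_nonneg.2 (hle t (Ioo_subset_Icc_self ht)))
  have hgt : g t = 0 := by
    have := hmono ht ⟨hab, le_rfl⟩ ht.2
    simp only [g, integral_same, mul_zero] at this
    exact le_antisymm (nonpos_of_mul_nonpos_right this (Real.exp_pos _)) (hg₀ t ht)
  exact le_antisymm (by simpa [g, hgt] using hle t ht) (hN₀ t ht)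

theorem negPart_add_integral_mul_le {k f : ℝ → ℝ} {a b c M : ℝ} (hab : a ≤ b)
    (hc : 0 ≤ c) (hkf : IntervalIntegrable (fun s => k s * f s) MeasureTheory.volume a b)
    (hf : IntervalIntegrable (fun s => (f s)⁻) MeasureTheory.volume a b)
    (hk₀ : ∀ s ∈ Icc a b, 0 ≤ k s) (hkM : ∀ s ∈ Icc a b, k s ≤ M) :
    (c + ∫ s in a..b, k s * f s)⁻ ≤ M * ∫ s in a..b, (f s)⁻ := by
  have hpoint : ∀ s ∈ Icc a b, -(k s * f s) ≤ M * (f s)⁻ ∧ 0 ≤ M * (f s)⁻ :=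
    fun s hs =>
      have hneg : k s * -f s ≤ k s * (f s)⁻ :=
        mul_le_mul_of_nonneg_left (neg_le_negPart _) (hk₀ s hs)
      have hbound : k s * (f s)⁻ ≤ M * (f s)⁻ :=
        mul_le_mul_of_nonneg_right (hkM s hs) (negPart_nonneg _)
      ⟨by linarith, (mul_nonneg (hk₀ s hs) (negPart_nonneg _)).trans hbound⟩
  rw [← integral_const_mul, negPart_def]
  refine max_le ?_ (integral_nonneg hab fun s hs => (hpoint s hs).2)
  calc -(c + ∫ s in a..b, k s * f s) ≤ ∫ s in a..b, -(k s * f s) := by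
        rw [intervalIntegral.integral_neg]; linarith
    _ ≤ ∫ s in a..b, M * (f s)⁻ :=
        integral_mono_on hab hkf.neg (hf.const_mul M) fun s hs => (hpoint s hs).1

theorem stmt_16_general (T : ℝ) (A : ℝ → ℝ → ℝ)
    (hAcont : ContinuousOn (fun p : ℝ × ℝ => A p.1 p.2) (Icc 0 T ×ˢ Icc 0 T))
    (hAnonneg : ∀ t ∈ Icc 0 T, ∀ s ∈ Icc 0 T, 0 ≤ A t s)
    (ψ : ℝ → ℝ)
    (hψnonneg : ∀ t ∈ Icc 0 T, 0 ≤ ψ t)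
    (Y : ℝ → ℝ) (hYcont : ContinuousOn Y (Icc 0 T))
    (heq : ∀ t ∈ Icc 0 T, Y t = ψ t + ∫ s in t..T, A t s * Y s) :
    ∀ t ∈ Icc 0 T, 0 ≤ Y t := by
  obtain ⟨M, hM⟩ := (isCompact_Icc.prod isCompact_Icc).exists_bound_of_continuousOn hAcont
  have hYneg : ContinuousOn (fun s => (Y s)⁻) (Icc 0 T) :=
    continuous_negPart.comp_continuousOn hYcont
  have hYneg_le : ∀ t ∈ Icc 0 T, (Y t)⁻ ≤ M * ∫ s in t..T, (Y s)⁻ := by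
    intro t ht
    have hsub : Icc t T ⊆ Icc 0 T := Icc_subset_Icc_left ht.1
    have hAt : ContinuousOn (A t) (Icc 0 T) :=
      hAcont.comp (continuousOn_const.prodMk continuousOn_id) fun s hs => ⟨ht, hs⟩
    rw [heq t ht]
    exact negPart_add_integral_mul_le ht.2 (hψnonneg t ht)
      (((hAt.mul hYcont).mono hsub).intervalIntegrable_of_Icc ht.2)
      ((hYneg.mono hsub).intervalIntegrable_of_Icc ht.2) (fun s hs => hAnonneg t ht s (hsub hs))
      fun s hs => (le_abs_self _).trans (hM (t, s) ⟨ht, hsub hs⟩)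
  intro t ht
  exact negPart_eq_zero.1
    (eqOn_zero_of_le_mul_integral hYneg (fun s _ => negPart_nonneg _) hYneg_le ht)

theorem stmt_16 (T : ℝ) (hT : 0 < T) (A : ℝ → ℝ → ℝ)
    (hAcont : ContinuousOn (fun p : ℝ × ℝ => A p.1 p.2) (Icc 0 T ×ˢ Icc 0 T))
    (hAnonneg : ∀ t ∈ Icc 0 T, ∀ s ∈ Icc 0 T, 0 ≤ A t s)
    (hAmono : ∀ t ∈ Icc 0 T, ∀ τ ∈ Icc 0 T, ∀ s ∈ Icc 0 T,
      t ≤ τ → A τ s ≤ A t s)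
    (ψ : ℝ → ℝ) (hψcont : ContinuousOn ψ (Icc 0 T))
    (hψnonneg : ∀ t ∈ Icc 0 T, 0 ≤ ψ t)
    (hψmono : ∀ t ∈ Icc 0 T, ∀ τ ∈ Icc 0 T, t ≤ τ → ψ τ ≤ ψ t)
    (Y : ℝ → ℝ) (hYcont : ContinuousOn Y (Icc 0 T))
    (heq : ∀ t ∈ Icc 0 T, Y t = ψ t + ∫ s in t..T, A t s * Y s) :
    ∀ t ∈ Icc 0 T, 0 ≤ Y t :=
  stmt_16_general T A hAcont hAnonneg ψ hψnonneg Y hYcont heq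
end
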